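/- Let (A,B,C,D) be a discrete-time LTI system with state dimension n, input dimension m, output dimension p, and suppose the depth-L observability matrix [C; CA; …; CA^{L−1}] has rank n. Then the finite-horizon behavior B|_L is a linear subspace of ℝ^{Lm}×ℝ^{Lp} of dimension m·L + n. -/
import Mathlib

open Matrix

/-- `(u, y)` is a length-`L` trajectory of the LTI system `(A, B, C, D)`. -/
def IsTrajectory {n m p : ℕ} (A : Matrix (Fin n) (Fin n) ℝ) (B : Matrix (Fin n) (Fin m) ℝ)
    (C : Matrix (Fin p) (Fin n) ℝ) (D : Matrix (Fin p) (Fin m) ℝ) (L : ℕ)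
    (u : Fin L → Fin m → ℝ) (y : Fin L → Fin p → ℝ) : Prop :=
  ∃ x : Fin (L + 1) → Fin n → ℝ,
    ∀ k : Fin L,
      x k.succ = A.mulVec (x k.castSucc) + B.mulVec (u k) ∧
      y k = C.mulVec (x k.castSucc) + D.mulVec (u k)

/-- Finite-horizon observability matrix `[C; CA; …; CA^{L-1}]` of depth `L`. -/
noncomputable def obsMat {n p : ℕ} (A : Matrix (Fin n) (Fin n) ℝ)
    (C : Matrix (Fin p) (Fin n) ℝ) (L : ℕ) : Matrix (Fin L × Fin p) (Fin n) ℝ :=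
  fun r j => (C * A ^ (r.1 : ℕ)) r.2 j

section Aux

variable {n m : ℕ} (A : Matrix (Fin n) (Fin n) ℝ) (B : Matrix (Fin n) (Fin m) ℝ)

/-- Explicit state solution of the recursion. -/
def xsol (u : ℕ → Fin m → ℝ) (x0 : Fin n → ℝ) : ℕ → Fin n → ℝ
  | 0 => x0
  | k + 1 => A.mulVec (xsol u x0 k) + B.mulVec (u k)

lemma xsol_add (u v : ℕ → Fin m → ℝ) (x0 x1 : Fin n → ℝ) :
    ∀ k, xsol A B (u + v) (x0 + x1) k = xsol A B u x0 k + xsol A B v x1 k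
  | 0 => rfl
  | k + 1 => by
    simp only [xsol, xsol_add u v x0 x1 k, Pi.add_apply, Matrix.mulVec_add]
    abel

lemma xsol_smul (c : ℝ) (u : ℕ → Fin m → ℝ) (x0 : Fin n → ℝ) :
    ∀ k, xsol A B (c • u) (c • x0) k = c • xsol A B u x0 k
  | 0 => rfl
  | k + 1 => by
    simp only [xsol, xsol_smul c u x0 k, Pi.smul_apply, Matrix.mulVec_smul, smul_add]

lemma xsol_zero (x0 : Fin n → ℝ) :
    ∀ k, xsol A B 0 x0 k = (A ^ k).mulVec x0
  | 0 => by simp [xsol]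
  | k + 1 => by
    simp [xsol, xsol_zero x0 k, Matrix.mulVec_mulVec, pow_succ']

end Aux

/-- Extend a stacked finite input to `ℕ`. -/
def uext {m L : ℕ} (U : Fin L × Fin m → ℝ) : ℕ → Fin m → ℝ :=
  fun k a => if h : k < L then U (⟨k, h⟩, a) else 0

lemma uext_add {m L : ℕ} (U V : Fin L × Fin m → ℝ) :
    uext (U + V) = uext U + uext V := by
  funext k a
  simp only [uext, Pi.add_apply]
  split <;> simp

lemma uext_smul {m L : ℕ} (c : ℝ) (U : Fin L × Fin m → ℝ) :
    uext (c • U) = c • uext U := by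
  funext k a
  simp only [uext, Pi.smul_apply, smul_eq_mul]
  split <;> simp

lemma uext_zero {m L : ℕ} : uext (0 : Fin L × Fin m → ℝ) = 0 := by
  funext k a; simp only [uext, Pi.zero_apply]; split <;> rfl

/-- The trajectory map as a linear map. -/
noncomputable def trajMap {n m p L : ℕ} (A : Matrix (Fin n) (Fin n) ℝ)
    (B : Matrix (Fin n) (Fin m) ℝ) (C : Matrix (Fin p) (Fin n) ℝ)
    (D : Matrix (Fin p) (Fin m) ℝ) :
    ((Fin L × Fin m → ℝ) × (Fin n → ℝ)) →ₗ[ℝ]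
      ((Fin L × Fin m → ℝ) × (Fin L × Fin p → ℝ)) where
  toFun w := (w.1, fun q =>
    (C.mulVec (xsol A B (uext w.1) w.2 (q.1 : ℕ)) + D.mulVec (fun b => w.1 (q.1, b))) q.2)
  map_add' w w' := by
    ext q
    · rfl
    · show (C.mulVec (xsol A B (uext (w.1 + w'.1)) (w.2 + w'.2) (q.1 : ℕ)) +
        D.mulVec ((fun b => w.1 (q.1, b)) + fun b => w'.1 (q.1, b))) q.2 = _
      rw [uext_add, xsol_add, Matrix.mulVec_add, Matrix.mulVec_add]
      show _ = (C.mulVec (xsol A B (uext w.1) w.2 (q.1 : ℕ)) +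
          D.mulVec (fun b => w.1 (q.1, b))) q.2 +
        (C.mulVec (xsol A B (uext w'.1) w'.2 (q.1 : ℕ)) +
          D.mulVec (fun b => w'.1 (q.1, b))) q.2
      simp only [Pi.add_apply]
      ring
  map_smul' c w := by
    ext q
    · rfl
    · show (C.mulVec (xsol A B (uext (c • w.1)) (c • w.2) (q.1 : ℕ)) +
        D.mulVec (c • fun b => w.1 (q.1, b))) q.2 = _
      rw [uext_smul, xsol_smul, Matrix.mulVec_smul, Matrix.mulVec_smul]
      show _ = c • ((C.mulVec (xsol A B (uext w.1) w.2 (q.1 : ℕ)) +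
          D.mulVec (fun b => w.1 (q.1, b))) q.2)
      simp only [Pi.smul_apply, Pi.add_apply, smul_eq_mul]
      ring

/-- **Dimension of the finite-horizon behavior.** If the depth-`L` observability matrix
of `(A, C)` has rank `n`, then the finite-horizon behavior `𝔅|_L` (the set of stacked
length-`L` trajectories) is a linear subspace of `ℝ^{Lm} × ℝ^{Lp}` of dimension
`m L + n`. -/
theorem behavior_is_subspace_of_finrank {n m p L : ℕ}
    (A : Matrix (Fin n) (Fin n) ℝ) (B : Matrix (Fin n) (Fin m) ℝ)
    (C : Matrix (Fin p) (Fin n) ℝ) (D : Matrix (Fin p) (Fin m) ℝ)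
    (hobs : (obsMat A C L).rank = n) :
    ∃ S : Submodule ℝ ((Fin L × Fin m → ℝ) × (Fin L × Fin p → ℝ)),
      (S : Set ((Fin L × Fin m → ℝ) × (Fin L × Fin p → ℝ))) =
        {w | IsTrajectory A B C D L (fun k a => w.1 (k, a)) (fun k a => w.2 (k, a))} ∧
      Module.finrank ℝ S = m * L + n := by
  refine ⟨LinearMap.range (trajMap A B C D), ?_, ?_⟩
  · ext w
    simp only [SetLike.mem_coe, LinearMap.mem_range, Set.mem_setOf_eq]
    constructor
    · rintro ⟨⟨U, x0⟩, rfl⟩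
      refine ⟨fun k => xsol A B (uext U) x0 (k : ℕ), fun k => ?_⟩
      have hu : uext U (k : ℕ) = fun a => U (k, a) := by
        funext a; simp [uext, k.isLt]
      constructor
      · show A.mulVec (xsol A B (uext U) x0 (k : ℕ)) + B.mulVec (uext U (k : ℕ)) = _
        rw [hu]
        rfl
      · rfl
    · rintro ⟨x, hx⟩
      refine ⟨(w.1, x 0), ?_⟩
      have key : ∀ k (hk : k ≤ L),
          xsol A B (uext w.1) (x 0) k = x ⟨k, Nat.lt_succ_of_le hk⟩ := by
        intro k
        induction k with
        | zero => intro _; rfl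
        | succ k ih =>
          intro hk
          have hkL : k < L := hk
          have h1 := (hx ⟨k, hkL⟩).1
          show A.mulVec (xsol A B (uext w.1) (x 0) k) + B.mulVec (uext w.1 k) = _
          rw [ih (Nat.le_of_lt hkL)]
          have hu : uext w.1 k = fun a => w.1 (⟨k, hkL⟩, a) := by
            funext a; simp [uext, hkL]
          rw [hu]
          exact h1.symm
      have hw2 : ∀ q : Fin L × Fin p,
          w.2 q = (C.mulVec (xsol A B (uext w.1) (x 0) (q.1 : ℕ)) +
            D.mulVec (fun b => w.1 (q.1, b))) q.2 := by
        intro q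
        have h2 := (hx q.1).2
        have := congrFun h2 q.2
        rw [key (q.1 : ℕ) (Nat.le_of_lt q.1.isLt)]
        rw [show (⟨(q.1 : ℕ), Nat.lt_succ_of_le (Nat.le_of_lt q.1.isLt)⟩ : Fin (L+1))
          = q.1.castSucc from rfl]
        exact this
      have h2comp : ((trajMap A B C D) (w.1, x 0)).2 = w.2 :=
        funext fun q => (hw2 q).symm
      exact Prod.ext rfl h2comp
  · have hinj : Function.Injective (trajMap (L := L) A B C D) := by
      rw [← LinearMap.ker_eq_bot]
      rw [Submodule.eq_bot_iff]
      rintro ⟨U, x0⟩ hU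
      simp only [LinearMap.mem_ker] at hU
      have hU1 : U = 0 := congrArg Prod.fst hU
      subst hU1
      have hx0 : (obsMat A C L).mulVec x0 = 0 := by
        funext q
        have h2 := congrFun (congrArg Prod.snd hU) q
        simp only [trajMap, LinearMap.coe_mk, AddHom.coe_mk, uext_zero, xsol_zero,
          Pi.zero_apply, Prod.snd_zero] at h2
        have hD : D.mulVec (fun _ => (0:ℝ)) = 0 := by
          have : (fun _ : Fin m => (0:ℝ)) = 0 := rfl
          rw [this, Matrix.mulVec_zero]
        rw [hD] at h2
        simp only [Pi.add_apply, Pi.zero_apply, add_zero] at h2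
        have : (obsMat A C L).mulVec x0 q = (C.mulVec ((A ^ (q.1 : ℕ)).mulVec x0)) q.2 := by
          simp [obsMat, Matrix.mulVec_mulVec]
          rfl
        rw [this, h2]; rfl
      -- use rank condition
      have hker : LinearMap.ker (obsMat A C L).mulVecLin = ⊥ := by
        have h1 := LinearMap.finrank_range_add_finrank_ker (obsMat A C L).mulVecLin
        have h2 : Module.finrank ℝ (Fin n → ℝ) = n := by simp
        rw [h2] at h1
        have h3 : Module.finrank ℝ (LinearMap.range (obsMat A C L).mulVecLin) = n := hobs
        rw [h3] at h1
        have h4 : Module.finrank ℝ (LinearMap.ker (obsMat A C L).mulVecLin) = 0 := by omega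
        exact Submodule.finrank_eq_zero.mp h4
      have : x0 ∈ LinearMap.ker (obsMat A C L).mulVecLin := hx0
      rw [hker] at this
      simp only [Submodule.mem_bot] at this
      subst this
      rfl
    rw [LinearMap.finrank_range_of_inj hinj]
    simp [Module.finrank_prod, mul_comm]
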